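/- Let a ∈ H^s(𝕋²) with s > 1 + d/2 where d = 2, and let ⟨∇⟩^s be the Bessel potential operator. Then the commutator satisfies ‖[a, ⟨∇⟩^s]u‖_{L²(𝕋²)} ≤ C‖a‖_{H^s}‖u‖_{H^{s−1}} for all u ∈ H^{s−1}(𝕋²). -/

import Mathlib

noncomputable section

def zsq (ξ : Fin 2 → ℤ) : ℝ := ∑ i, ((ξ i : ℝ))^2

/-- Sobolev weight `⟨ξ⟩^{2s} = (1+|ξ|²)^s` -/
def wgt (s : ℝ) (ξ : Fin 2 → ℤ) : ℝ := (1 + zsq ξ) ^ s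

/-- Sobolev norm `‖·‖_{H^s(𝕋²)}` on the Fourier side -/
def sobNorm (s : ℝ) (c : (Fin 2 → ℤ) → ℂ) : ℝ :=
  Real.sqrt (∑' ξ, wgt s ξ * ‖c ξ‖^2)

/-- Fourier coefficients of the commutator `[a, ⟨∇⟩^s]u`, where `α`, `υ` are the
Fourier coefficients of `a` and `u`: the `ξ`-th coefficient is
`∑_η α(ξ−η) û(η) (⟨η⟩^s − ⟨ξ⟩^s)`. -/
def commCoef (s : ℝ) (α υ : (Fin 2 → ℤ) → ℂ) (ξ : Fin 2 → ℤ) : ℂ :=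
  ∑' η, α (ξ - η) * υ η
    * ((((1 + zsq η) ^ (s/2) : ℝ) : ℂ) - (((1 + zsq ξ) ^ (s/2) : ℝ) : ℂ))

/-!
The symbol of the commutator obeys `|⟨ξ⟩^s - ⟨η⟩^s| ≤ C (⟨ξ - η⟩^s + ⟨ξ - η⟩ ⟨η⟩^(s-1))`, by the
mean value theorem and the triangle inequality `⟨ξ⟩ ≤ ⟨ξ - η⟩ + ⟨η⟩` for the Japanese bracket.
So the Fourier coefficients of `[a, ⟨∇⟩^s]u` are dominated by `A ∗ (k V) + (A k) ∗ V`, where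
`A = ⟨·⟩^s |â|` and `V = ⟨·⟩^(s-1) |û|` lie in `ℓ²`, and `k = ⟨·⟩^(1-s)` lies in `ℓ²(ℤ²)` exactly
because `2 (s - 1) > 2`. By Cauchy–Schwarz `k V` and `A k` lie in `ℓ¹`, and Young's inequality
`‖f ∗ g‖₂ ≤ ‖f‖₁ ‖g‖₂` finishes. All sums are taken in `ℝ≥0∞`, so no summability has to be tracked.
-/

open scoped ENNReal

lemma rpow_sub_rpow_le {x y p : ℝ} (hy : 0 ≤ y) (hyx : y ≤ x) (hp : 1 ≤ p) :
    x ^ p - y ^ p ≤ p * x ^ (p - 1) * (x - y) := by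
  rcases hyx.eq_or_lt with rfl | hlt
  · simp
  have hx : 0 < x := hy.trans_lt hlt
  -- Bernoulli's inequality for `(y / x) ^ p = (1 + (y / x - 1)) ^ p`
  have hb := one_add_mul_self_le_rpow_one_add (s := y / x - 1)
    (by linarith [div_nonneg hy hx.le]) hp
  rw [add_sub_cancel, Real.div_rpow hy hx.le, le_div_iff₀ (by positivity)] at hb
  have hxp : x ^ p = x ^ (p - 1) * x := by
    rw [← Real.rpow_add_one hx.ne']; ring_nf
  rw [hxp] at hb ⊢
  field_simp at hb
  nlinarith [hb]

lemma abs_rpow_sub_rpow_le {x y p : ℝ} (hx : 0 ≤ x) (hy : 0 ≤ y) (hp : 1 ≤ p) :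
    |x ^ p - y ^ p| ≤ p * max x y ^ (p - 1) * |x - y| := by
  wlog hyx : y ≤ x generalizing x y
  · rw [abs_sub_comm, abs_sub_comm x, max_comm]
    exact this hy hx (le_of_not_ge hyx)
  rw [abs_of_nonneg (sub_nonneg.mpr (Real.rpow_le_rpow hy hyx (by linarith))),
    abs_of_nonneg (sub_nonneg.mpr hyx), max_eq_left hyx]
  exact rpow_sub_rpow_le hy hyx hp

lemma add_rpow_le_two_rpow_mul {a b q : ℝ} (ha : 0 ≤ a) (hb : 0 ≤ b) (hq : 0 ≤ q) :
    (a + b) ^ q ≤ 2 ^ q * (a ^ q + b ^ q) := by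
  wlog hab : a ≤ b generalizing a b
  · rw [add_comm a, add_comm (a ^ q)]
    exact this hb ha (le_of_not_ge hab)
  calc (a + b) ^ q ≤ (2 * b) ^ q := by gcongr; linarith
    _ = 2 ^ q * b ^ q := Real.mul_rpow zero_le_two hb
    _ ≤ 2 ^ q * (a ^ q + b ^ q) := by
      gcongr
      exact le_add_of_nonneg_left (Real.rpow_nonneg ha q)

lemma abs_sqrt_one_add_sq_sub_le (a b : ℝ) : |√(1 + a ^ 2) - √(1 + b ^ 2)| ≤ |a - b| := by
  have hab : 1 + a * b ≤ √(1 + a ^ 2) * √(1 + b ^ 2) := by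
    rw [← Real.sqrt_mul (by positivity)]
    exact (le_abs_self _).trans (Real.abs_le_sqrt (by nlinarith [sq_nonneg (a - b)]))
  apply sq_le_sq.mp
  nlinarith [Real.sq_sqrt (by positivity : (0 : ℝ) ≤ 1 + a ^ 2),
    Real.sq_sqrt (by positivity : (0 : ℝ) ≤ 1 + b ^ 2)]

section JapaneseBracket

variable {E : Type*} [SeminormedAddCommGroup E]

def bracket (x : E) : ℝ := √(1 + ‖x‖ ^ 2)

lemma one_le_bracket (x : E) : 1 ≤ bracket x :=
  Real.one_le_sqrt.mpr (le_add_of_nonneg_right (sq_nonneg _))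

lemma bracket_pos (x : E) : 0 < bracket x := one_pos.trans_le (one_le_bracket x)

lemma norm_le_bracket (x : E) : ‖x‖ ≤ bracket x :=
  Real.le_sqrt_of_sq_le (le_add_of_nonneg_left zero_le_one)

lemma bracket_zero : bracket (0 : E) = 1 := by simp [bracket]

lemma bracket_rpow (x : E) (t : ℝ) : bracket x ^ t = (1 + ‖x‖ ^ 2) ^ (t / 2) := by
  rw [bracket, Real.sqrt_eq_rpow, ← Real.rpow_mul (by positivity)]
  ring_nf

lemma abs_bracket_sub_bracket_le (x y : E) : |bracket x - bracket y| ≤ ‖x - y‖ :=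
  (abs_sqrt_one_add_sq_sub_le _ _).trans (abs_norm_sub_norm_le x y)

lemma bracket_le_bracket_sub_add (x y : E) : bracket x ≤ bracket (x - y) + bracket y := by
  linarith [le_abs_self (bracket x - bracket y), abs_bracket_sub_bracket_le x y,
    norm_le_bracket (x - y)]

theorem abs_bracket_rpow_sub_le {s : ℝ} (hs : 1 ≤ s) (x y : E) :
    |bracket x ^ s - bracket y ^ s| ≤
      s * 2 ^ (s - 1) * (bracket (x - y) ^ s + bracket (x - y) * bracket y ^ (s - 1)) := by
  set d := bracket (x - y)
  have hd : 0 < d := bracket_pos _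
  have hy : 0 < bracket y := bracket_pos y
  calc |bracket x ^ s - bracket y ^ s|
      ≤ s * max (bracket x) (bracket y) ^ (s - 1) * |bracket x - bracket y| :=
        abs_rpow_sub_rpow_le (bracket_pos x).le hy.le hs
    _ ≤ s * (d + bracket y) ^ (s - 1) * d := by
        have hmax : max (bracket x) (bracket y) ≤ d + bracket y :=
          max_le (bracket_le_bracket_sub_add x y) (le_add_of_nonneg_left hd.le)
        have hdiff : |bracket x - bracket y| ≤ d :=
          (abs_bracket_sub_bracket_le x y).trans (norm_le_bracket _)
        gcongr
    _ ≤ s * (2 ^ (s - 1) * (d ^ (s - 1) + bracket y ^ (s - 1))) * d := by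
        gcongr
        exact add_rpow_le_two_rpow_mul hd.le hy.le (by linarith)
    _ = s * 2 ^ (s - 1) * (d ^ s + d * bracket y ^ (s - 1)) := by
        rw [Real.rpow_sub_one hd.ne']
        field_simp

end JapaneseBracket

theorem ENNReal.tsum_mul_sq_le {ι : Type*} (f g : ι → ℝ≥0∞) :
    (∑' i, f i * g i) ^ 2 ≤ (∑' i, f i ^ 2) * ∑' i, g i ^ 2 := by
  let _ : MeasurableSpace ι := ⊤
  have h := ENNReal.lintegral_mul_le_Lp_mul_Lq MeasureTheory.Measure.count
    Real.HolderConjugate.two_two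
    (measurable_from_top (f := f)).aemeasurable (measurable_from_top (f := g)).aemeasurable
  simp only [Pi.mul_apply, MeasureTheory.lintegral_count, ENNReal.rpow_two] at h
  calc (∑' i, f i * g i) ^ 2
      ≤ ((∑' i, f i ^ 2) ^ (1 / 2 : ℝ) * (∑' i, g i ^ 2) ^ (1 / 2 : ℝ)) ^ 2 := by gcongr
    _ = (∑' i, f i ^ 2) * ∑' i, g i ^ 2 := by
      rw [mul_pow, ← ENNReal.rpow_natCast, ← ENNReal.rpow_natCast, ← ENNReal.rpow_mul,
        ← ENNReal.rpow_mul]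
      norm_num

theorem ENNReal.tsum_mul_sq_le_tsum_mul_tsum_mul_sq {ι : Type*} (w g : ι → ℝ≥0∞) :
    (∑' i, w i * g i) ^ 2 ≤ (∑' i, w i) * ∑' i, w i * g i ^ 2 := by
  have hsqrt (x : ℝ≥0∞) : (x ^ (1 / 2 : ℝ)) ^ 2 = x := by
    rw [← ENNReal.rpow_natCast, ← ENNReal.rpow_mul]; norm_num
  have h := ENNReal.tsum_mul_sq_le (fun i => w i ^ (1 / 2 : ℝ)) (fun i => w i ^ (1 / 2 : ℝ) * g i)
  simpa only [← mul_assoc, ← sq, hsqrt, mul_pow] using h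

theorem ENNReal.add_sq_le (x y : ℝ≥0∞) : (x + y) ^ 2 ≤ 2 * (x ^ 2 + y ^ 2) := by
  have h := ENNReal.rpow_add_le_mul_rpow_add_rpow x y one_le_two
  norm_num [ENNReal.rpow_two] at h
  exact h

section Convolution

variable {G : Type*} [AddCommGroup G]

lemma ENNReal.tsum_mul_sub_comm (f g : G → ℝ≥0∞) (ξ : G) :
    ∑' η, f (ξ - η) * g η = ∑' η, g (ξ - η) * f η := by
  rw [← (Equiv.subLeft ξ).tsum_eq]
  simp [mul_comm]

theorem ENNReal.tsum_sq_conv_le (f g : G → ℝ≥0∞) :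
    ∑' ξ, (∑' η, f (ξ - η) * g η) ^ 2 ≤ (∑' ζ, f ζ) ^ 2 * ∑' η, g η ^ 2 := by
  have htrans (η : G) : ∑' ξ, f (ξ - η) = ∑' ζ, f ζ := (Equiv.subRight η).tsum_eq f
  calc ∑' ξ, (∑' η, f (ξ - η) * g η) ^ 2
      ≤ ∑' ξ, (∑' ζ, f ζ) * ∑' η, f (ξ - η) * g η ^ 2 := by
        gcongr with ξ
        rw [← (Equiv.subLeft ξ).tsum_eq f]
        exact ENNReal.tsum_mul_sq_le_tsum_mul_tsum_mul_sq _ _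
    _ = (∑' ζ, f ζ) * ∑' η, (∑' ξ, f (ξ - η)) * g η ^ 2 := by
        simp_rw [ENNReal.tsum_mul_left, ← ENNReal.tsum_mul_right]
        rw [ENNReal.tsum_comm]
    _ = (∑' ζ, f ζ) ^ 2 * ∑' η, g η ^ 2 := by
        simp_rw [htrans, ENNReal.tsum_mul_left]
        ring

end Convolution

def latticeEmbedding : (Fin 2 → ℤ) →+ EuclideanSpace ℝ (Fin 2) where
  toFun ξ := WithLp.toLp 2 fun i => (ξ i : ℝ)
  map_zero' := by ext; simp
  map_add' _ _ := by ext; simp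

lemma zsq_eq_norm_sq (ξ : Fin 2 → ℤ) : zsq ξ = ‖latticeEmbedding ξ‖ ^ 2 := by
  simp [EuclideanSpace.norm_sq_eq, zsq, latticeEmbedding]

lemma one_add_zsq_rpow (ξ : Fin 2 → ℤ) (t : ℝ) :
    (1 + zsq ξ) ^ t = bracket (latticeEmbedding ξ) ^ (2 * t) := by
  rw [bracket_rpow, zsq_eq_norm_sq]
  ring_nf

lemma norm_le_norm_latticeEmbedding (ξ : Fin 2 → ℤ) : ‖ξ‖ ≤ ‖latticeEmbedding ξ‖ :=
  pi_norm_le_iff_of_nonneg (norm_nonneg _) |>.mpr fun i => by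
    simpa [latticeEmbedding, Int.norm_eq_abs] using PiLp.norm_apply_le (latticeEmbedding ξ) i

lemma summable_bracket_rpow {r : ℝ} (hr : r < -2) :
    Summable fun ξ : Fin 2 → ℤ => bracket (latticeEmbedding ξ) ^ r := by
  refine .of_norm_bounded_eventually (EisensteinSeries.summable_one_div_norm_rpow (k := -r)
    (by linarith)) ?_
  filter_upwards [Filter.eventually_cofinite_ne 0] with ξ hξ
  rw [neg_neg, Real.norm_of_nonneg (Real.rpow_nonneg (bracket_pos _).le _)]
  exact Real.rpow_le_rpow_of_nonpos (norm_pos_iff.mpr hξ)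
    ((norm_le_norm_latticeEmbedding ξ).trans (norm_le_bracket _)) (by linarith)

def weight (t : ℝ) (ξ : Fin 2 → ℤ) : ℝ≥0∞ := ENNReal.ofReal (bracket (latticeEmbedding ξ) ^ t)

lemma weight_add (t u : ℝ) (ξ : Fin 2 → ℤ) : weight (t + u) ξ = weight t ξ * weight u ξ := by
  rw [weight, Real.rpow_add (bracket_pos _),
    ENNReal.ofReal_mul (Real.rpow_nonneg (bracket_pos _).le _), weight, weight]

lemma weight_zero (ξ : Fin 2 → ℤ) : weight 0 ξ = 1 := by simp [weight]

lemma wgt_nonneg (t : ℝ) (ξ : Fin 2 → ℤ) : 0 ≤ wgt t ξ := by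
  rw [wgt, one_add_zsq_rpow]
  exact Real.rpow_nonneg (bracket_pos _).le _

lemma ofReal_wgt_mul_norm_sq (t : ℝ) (c : ℂ) (ξ : Fin 2 → ℤ) :
    ENNReal.ofReal (wgt t ξ * ‖c‖ ^ 2) = (weight t ξ * ‖c‖ₑ) ^ 2 := by
  have hb := Real.rpow_nonneg (bracket_pos (latticeEmbedding ξ)).le t
  rw [wgt, one_add_zsq_rpow, mul_comm 2 t, Real.rpow_mul (bracket_pos _).le, Real.rpow_two,
    ← mul_pow, ENNReal.ofReal_pow (by positivity), ENNReal.ofReal_mul hb, ofReal_norm, weight]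

def weightedCoeff (t : ℝ) (c : (Fin 2 → ℤ) → ℂ) (ξ : Fin 2 → ℤ) : ℝ≥0∞ := weight t ξ * ‖c ξ‖ₑ

lemma weightedCoeff_zero (c : (Fin 2 → ℤ) → ℂ) : weightedCoeff 0 c = fun ξ => ‖c ξ‖ₑ := by
  ext ξ
  rw [weightedCoeff, weight_zero, one_mul]

lemma sobNorm_eq (t : ℝ) (c : (Fin 2 → ℤ) → ℂ) :
    sobNorm t c = √(∑' ξ, weightedCoeff t c ξ ^ 2).toReal := by
  simp_rw [weightedCoeff, ← ofReal_wgt_mul_norm_sq,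
    ENNReal.tsum_toReal_eq (fun _ => ENNReal.ofReal_ne_top),
    ENNReal.toReal_ofReal (mul_nonneg (wgt_nonneg _ _) (sq_nonneg _)), sobNorm]

lemma tsum_weightedCoeff_sq_ne_top {t : ℝ} {c : (Fin 2 → ℤ) → ℂ}
    (hc : Summable fun ξ => wgt t ξ * ‖c ξ‖ ^ 2) :
    ∑' ξ, weightedCoeff t c ξ ^ 2 ≠ ⊤ := by
  simpa only [weightedCoeff, ofReal_wgt_mul_norm_sq] using hc.tsum_ofReal_ne_top

lemma weight_sq (r : ℝ) (ξ : Fin 2 → ℤ) : weight r ξ ^ 2 = weight (2 * r) ξ := by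
  rw [sq, ← weight_add, two_mul]

lemma tsum_weight_sq_ne_top {r : ℝ} (hr : r < -1) : ∑' ξ, weight r ξ ^ 2 ≠ ⊤ := by
  simp_rw [weight_sq]
  exact (summable_bracket_rpow (by linarith)).tsum_ofReal_ne_top

lemma one_le_tsum_weight_sq (r : ℝ) : 1 ≤ ∑' ξ, weight r ξ ^ 2 :=
  calc 1 = weight r 0 ^ 2 := by simp [weight, bracket_zero]
    _ ≤ _ := ENNReal.le_tsum (0 : Fin 2 → ℤ)

lemma enorm_commCoef_summand_le {s : ℝ} (hs : 1 ≤ s) (a u : ℂ) (ξ η : Fin 2 → ℤ) :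
    ‖a * u * ((((1 + zsq η) ^ (s / 2) : ℝ) : ℂ) - (((1 + zsq ξ) ^ (s / 2) : ℝ) : ℂ))‖ₑ ≤
      ENNReal.ofReal (s * 2 ^ (s - 1)) *
        (weight s (ξ - η) * ‖a‖ₑ * (weight (1 - s) η * (weight (s - 1) η * ‖u‖ₑ)) +
          weight s (ξ - η) * ‖a‖ₑ * weight (1 - s) (ξ - η) * (weight (s - 1) η * ‖u‖ₑ)) := by
  set C := ENNReal.ofReal (s * 2 ^ (s - 1))
  have hmul : 2 * (s / 2) = s := by ring
  have hsymbol : ‖(((1 + zsq η) ^ (s / 2) : ℝ) : ℂ) - (((1 + zsq ξ) ^ (s / 2) : ℝ) : ℂ)‖ₑ ≤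
      C * (weight s (ξ - η) + weight 1 (ξ - η) * weight (s - 1) η) := by
    rw [← Complex.ofReal_sub, ← ofReal_norm, Complex.norm_real, Real.norm_eq_abs,
      one_add_zsq_rpow, one_add_zsq_rpow, hmul, abs_sub_comm]
    have hd := bracket_pos (latticeEmbedding (ξ - η))
    have hb := bracket_pos (latticeEmbedding η)
    calc _ ≤ ENNReal.ofReal (s * 2 ^ (s - 1) * (bracket (latticeEmbedding (ξ - η)) ^ s
            + bracket (latticeEmbedding (ξ - η)) * bracket (latticeEmbedding η) ^ (s - 1))) := by
          gcongr
          simpa only [map_sub] using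
            abs_bracket_rpow_sub_le hs (latticeEmbedding ξ) (latticeEmbedding η)
      _ = _ := by
          rw [ENNReal.ofReal_mul (by positivity),
            ENNReal.ofReal_add (Real.rpow_nonneg hd.le s)
              (mul_nonneg hd.le (Real.rpow_nonneg hb.le _)),
            ENNReal.ofReal_mul hd.le, weight, weight, weight, Real.rpow_one]
  have hη : weight (1 - s) η * weight (s - 1) η = 1 := by
    rw [← weight_add, sub_add_sub_cancel', sub_self, weight_zero]
  have hξη : weight 1 (ξ - η) = weight s (ξ - η) * weight (1 - s) (ξ - η) := by
    rw [← weight_add, add_sub_cancel]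
  calc _ = ‖a‖ₑ * ‖u‖ₑ *
        ‖(((1 + zsq η) ^ (s / 2) : ℝ) : ℂ) - (((1 + zsq ξ) ^ (s / 2) : ℝ) : ℂ)‖ₑ := by
        rw [enorm_mul, enorm_mul]
    _ ≤ ‖a‖ₑ * ‖u‖ₑ * (C * (weight s (ξ - η) * (weight (1 - s) η * weight (s - 1) η)
          + weight 1 (ξ - η) * weight (s - 1) η)) := by
        rw [hη, mul_one]
        gcongr
    _ = _ := by
        rw [hξη]
        ring

lemma enorm_commCoef_le {s : ℝ} (hs : 1 ≤ s) (α υ : (Fin 2 → ℤ) → ℂ) (ξ : Fin 2 → ℤ) :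
    ‖commCoef s α υ ξ‖ₑ ≤ ENNReal.ofReal (s * 2 ^ (s - 1)) *
      (∑' η, weightedCoeff s α (ξ - η) * (weight (1 - s) η * weightedCoeff (s - 1) υ η) +
        ∑' η, weightedCoeff s α (ξ - η) * weight (1 - s) (ξ - η) * weightedCoeff (s - 1) υ η) := by
  rw [← ENNReal.tsum_add, ← ENNReal.tsum_mul_left]
  exact enorm_tsum_le_tsum_enorm.trans
    (ENNReal.tsum_le_tsum fun η => enorm_commCoef_summand_le hs (α (ξ - η)) (υ η) ξ η)

lemma tsum_enorm_commCoef_sq_le {s : ℝ} (hs : 1 ≤ s) (α υ : (Fin 2 → ℤ) → ℂ) :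
    ∑' ξ, ‖commCoef s α υ ξ‖ₑ ^ 2 ≤ (2 * ENNReal.ofReal (s * 2 ^ (s - 1))) ^ 2 *
      (∑' ζ, weight (1 - s) ζ ^ 2) * (∑' ζ, weightedCoeff s α ζ ^ 2) *
        ∑' ζ, weightedCoeff (s - 1) υ ζ ^ 2 := by
  set C := ENNReal.ofReal (s * 2 ^ (s - 1))
  set A := weightedCoeff s α
  set V := weightedCoeff (s - 1) υ
  set k := weight (1 - s)
  set P := (∑' ζ, k ζ ^ 2) * (∑' ζ, A ζ ^ 2) * ∑' ζ, V ζ ^ 2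
  have hCS : (∑' ζ, k ζ * V ζ) ^ 2 ≤ (∑' ζ, k ζ ^ 2) * ∑' ζ, V ζ ^ 2 := ENNReal.tsum_mul_sq_le _ _
  have hCS' : (∑' ζ, A ζ * k ζ) ^ 2 ≤ (∑' ζ, A ζ ^ 2) * ∑' ζ, k ζ ^ 2 := ENNReal.tsum_mul_sq_le _ _
  have hF : ∑' ξ, (∑' η, A (ξ - η) * (k η * V η)) ^ 2 ≤ P := by
    simp_rw [ENNReal.tsum_mul_sub_comm A]
    calc _ ≤ (∑' ζ, k ζ * V ζ) ^ 2 * ∑' ζ, A ζ ^ 2 := ENNReal.tsum_sq_conv_le _ _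
      _ ≤ (∑' ζ, k ζ ^ 2) * (∑' ζ, V ζ ^ 2) * ∑' ζ, A ζ ^ 2 := by gcongr
      _ = P := mul_right_comm _ _ _
  have hG : ∑' ξ, (∑' η, A (ξ - η) * k (ξ - η) * V η) ^ 2 ≤ P :=
    calc _ ≤ (∑' ζ, A ζ * k ζ) ^ 2 * ∑' ζ, V ζ ^ 2 := ENNReal.tsum_sq_conv_le (fun ζ => A ζ * k ζ) V
      _ ≤ (∑' ζ, A ζ ^ 2) * (∑' ζ, k ζ ^ 2) * ∑' ζ, V ζ ^ 2 := by gcongr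
      _ = P := by rw [mul_comm (∑' ζ, A ζ ^ 2)]
  calc ∑' ξ, ‖commCoef s α υ ξ‖ₑ ^ 2
      ≤ ∑' ξ, C ^ 2 * (2 * ((∑' η, A (ξ - η) * (k η * V η)) ^ 2
          + (∑' η, A (ξ - η) * k (ξ - η) * V η) ^ 2)) := by
        gcongr with ξ
        grw [enorm_commCoef_le hs, mul_pow, ENNReal.add_sq_le]
    _ = C ^ 2 * 2 * (∑' ξ, (∑' η, A (ξ - η) * (k η * V η)) ^ 2
          + ∑' ξ, (∑' η, A (ξ - η) * k (ξ - η) * V η) ^ 2) := by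
        rw [ENNReal.tsum_mul_left, ENNReal.tsum_mul_left, ENNReal.tsum_add, mul_assoc]
    _ ≤ C ^ 2 * 2 * (P + P) := by gcongr
    _ = (2 * C) ^ 2 * P := by ring
    _ = _ := by simp only [P, mul_assoc]

/-- Kato–Ponce type commutator estimate on `𝕋²` (`d = 2`, `s > 1 + d/2 = 2`):
`‖[a, ⟨∇⟩^s]u‖_{L²} ≤ C ‖a‖_{H^s} ‖u‖_{H^{s−1}}`. -/
theorem stmt12 (s : ℝ) (hs : 2 < s) :
    ∃ C > 0, ∀ α υ : (Fin 2 → ℤ) → ℂ,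
      Summable (fun ξ => wgt s ξ * ‖α ξ‖^2) →
      Summable (fun ξ => wgt (s - 1) ξ * ‖υ ξ‖^2) →
      sobNorm 0 (commCoef s α υ) ≤ C * sobNorm s α * sobNorm (s - 1) υ := by
  set K := ∑' ζ, weight (1 - s) ζ ^ 2
  have hK : K ≠ ⊤ := tsum_weight_sq_ne_top (by linarith)
  have hKpos : 0 < K.toReal :=
    ENNReal.toReal_pos (one_pos.trans_le (one_le_tsum_weight_sq _)).ne' hK
  have hC₀ : 0 < s * 2 ^ (s - 1) := by positivity
  refine ⟨2 * (s * 2 ^ (s - 1)) * √K.toReal, by positivity, fun α υ hα hυ => ?_⟩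
  have hα' := tsum_weightedCoeff_sq_ne_top hα
  have hυ' := tsum_weightedCoeff_sq_ne_top hυ
  have hbound := tsum_enorm_commCoef_sq_le (s := s) (by linarith) α υ
  rw [sobNorm_eq, sobNorm_eq, sobNorm_eq, weightedCoeff_zero]
  calc _ ≤ √((2 * ENNReal.ofReal (s * 2 ^ (s - 1))) ^ 2 * K * (∑' ζ, weightedCoeff s α ζ ^ 2) *
          ∑' ζ, weightedCoeff (s - 1) υ ζ ^ 2).toReal :=
        Real.sqrt_le_sqrt (ENNReal.toReal_mono (by finiteness) hbound)
    _ = _ := by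
        simp only [ENNReal.toReal_mul, ENNReal.toReal_pow, ENNReal.toReal_ofReal hC₀.le]
        rw [Real.sqrt_mul (by positivity), Real.sqrt_mul (by positivity),
          Real.sqrt_mul (by positivity), Real.sqrt_sq (by positivity)]
        norm_num
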